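/- arXiv:2212.05130 — 3 statements merged into one kernel-verified Lean document; each statement's English description precedes it below -/
import Mathlib

section
/- Let N > 1 and define f(t,η) = (1 + η - t^N)/(1 - t) on [0,1) × [0,∞), and g(η) = sup{ t - s : f(t,0) ≤ f(s,η) }. Then g(η) → 0 as η → 0⁺. -/
open Filter Set Topology

/-- The function `f(t,η) = (1 + η - t^N)/(1 - t)`. -/
noncomputable def fAux (N t η : ℝ) : ℝ := (1 + η - t ^ N) / (1 - t)

/-- `g(η) = sup { t - s : f(t,0) ≤ f(s,η), t,s ∈ [0,1) }`. -/
noncomputable def gAux (N η : ℝ) : ℝ :=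
  sSup { d : ℝ | ∃ t ∈ Ico (0:ℝ) 1, ∃ s ∈ Ico (0:ℝ) 1,
    d = t - s ∧ fAux N t 0 ≤ fAux N s η }

theorem StrictMonoOn.exists_pos_le_sub_of_continuousOn {F : ℝ → ℝ} {a b h : ℝ} (hh : 0 < h)
    (hF : StrictMonoOn F (Icc a (b + h))) (hc : ContinuousOn F (Icc a (b + h))) :
    ∃ m > 0, ∀ s ∈ Icc a b, m ≤ F (s + h) - F s := by
  have hshift : MapsTo (· + h) (Icc a b) (Icc a (b + h)) :=
    fun s hs => ⟨by linarith [hs.1], by linarith [hs.2]⟩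
  have hincl : Icc a b ⊆ Icc a (b + h) := Icc_subset_Icc_right (by linarith)
  exact isCompact_Icc.exists_forall_le' (f := fun s => F (s + h) - F s)
    ((hc.comp (continuousOn_id.add continuousOn_const) hshift).sub (hc.mono hincl))
    fun s hs => sub_pos.2 (hF (hincl hs) (hshift hs) (by linarith))

theorem fAux_eq_add (N s η : ℝ) : fAux N s η = fAux N s 0 + η / (1 - s) := by
  rw [fAux, fAux, ← add_div]
  ring_nf

/-- `f(·,0)` is the slope of the secant of the strictly convex function `t ↦ t ^ N` through `1`. -/
theorem fAux_zero_strictMonoOn {N : ℝ} (hN : 1 < N) :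
    StrictMonoOn (fun t => fAux N t 0) (Ico 0 1) := by
  intro x hx y hy hxy
  have hslope (t : ℝ) : fAux N t 0 = (t ^ N - 1 ^ N) / (t - 1) := by
    rw [fAux, Real.one_rpow, ← neg_div_neg_eq]
    ring_nf
  simpa only [hslope] using (strictConvexOn_rpow hN).secant_strict_mono (a := 1)
    (mem_Ici.2 zero_le_one) hx.1 hy.1 hx.2.ne hy.2.ne hxy

theorem fAux_zero_continuousOn {N : ℝ} (hN : 0 ≤ N) :
    ContinuousOn (fun t => fAux N t 0) (Ico 0 1) :=
  ((continuous_const.sub (Real.continuous_rpow_const hN)).continuousOn).div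
    (continuous_const.sub continuous_id).continuousOn fun _ ht => sub_ne_zero.2 ht.2.ne'

theorem gAux_nonneg (N : ℝ) {η : ℝ} (hη : 0 ≤ η) : 0 ≤ gAux N η := by
  refine le_csSup ⟨1, ?_⟩ ⟨0, ⟨le_rfl, one_pos⟩, 0, ⟨le_rfl, one_pos⟩, (sub_self 0).symm, ?_⟩
  · rintro _ ⟨t, ht, s, hs, rfl, -⟩
    linarith [ht.2, hs.1]
  · rw [fAux_eq_add N 0 η]
    exact le_add_of_nonneg_right (div_nonneg hη (by norm_num))

/-- If `t - s > ε`, then `f(t,0) - f(s,0)` exceeds a fixed `m > 0`, while `f(s,η) - f(s,0)` is at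
most `η / ε`; so `δ = ε m` works. -/
theorem eventually_gAux_le {N : ℝ} (hN : 1 < N) {ε : ℝ} (hε : 0 < ε) :
    ∀ᶠ η in 𝓝[>] 0, gAux N η ≤ ε := by
  have hsub : Icc 0 (1 - ε + ε / 2) ⊆ Ico (0 : ℝ) 1 :=
    fun s hs => ⟨hs.1, by linarith [hs.2]⟩
  obtain ⟨m, hm, hgap⟩ := ((fAux_zero_strictMonoOn hN).mono hsub).exists_pos_le_sub_of_continuousOn
    (half_pos hε) ((fAux_zero_continuousOn (by linarith)).mono hsub)
  filter_upwards [Ioo_mem_nhdsGT (mul_pos hε hm)] with η ⟨hη, hηδ⟩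
  refine Real.sSup_le ?_ hε.le
  rintro _ ⟨t, ht, s, hs, rfl, hts⟩
  by_contra! hlt
  have hs' : s ∈ Icc 0 (1 - ε) := ⟨hs.1, by linarith [ht.2]⟩
  have hstep : fAux N (s + ε / 2) 0 < fAux N t 0 :=
    fAux_zero_strictMonoOn hN ⟨by linarith [hs.1], by linarith [ht.2]⟩ ht (by linarith)
  have hpert : η / (1 - s) ≤ η / ε := div_le_div_of_nonneg_left hη.le hε (by linarith [hs'.2])
  have hsmall : η / ε < m := (div_lt_iff₀ hε).2 (by linarith)
  rw [fAux_eq_add N s η] at hts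
  linarith [hgap s hs']

/-- `g(η) → 0` as `η → 0⁺`. -/
theorem stmt0 (N : ℝ) (hN : 1 < N) :
    Tendsto (gAux N) (𝓝[>] (0:ℝ)) (𝓝 0) := by
  refine tendsto_order.2 ⟨fun a ha => ?_, fun ε hε => ?_⟩
  · filter_upwards [self_mem_nhdsWithin] with η hη
    exact ha.trans_le (gAux_nonneg N (le_of_lt hη))
  · filter_upwards [eventually_gAux_le hN (half_pos hε)] with η hη
    exact hη.trans_lt (half_lt_self hε)
end

section
/- Fix N > 1. The one-dimensional isoperimetric profile satisfies the expansion I_{N,D}(w) ≥ (N/D)·w^{1-1/N}·(1 - O(w^{1/N})) as w → 0⁺; that is, there exist constants C > 0 and w₀ > 0 depending only on N such that for all 0 < w ≤ w₀ and all D > 0, I_{N,D}(w) ≥ (N/D)·w^{1-1/N}·(1 - C·w^{1/N}). -/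
/-!
Let `θ = (N-1)/N`, `K = 2^(N+1) N^(N/(N-1))` and `t = (K w)^(1/N)`, and bound the quotient
inside the infimum separately for small and large `ξ`. For `ξ ≤ t` the numerator is at least
`(w (ξ+1)^N)^θ = w^θ (ξ+1)^(N-1)` and the denominator at most `(ξ+1)^N`, so the quotient is at
least `w^θ / (1+ξ) ≥ w^θ (1-t)`. For `ξ ≥ t` we have `ξ ≥ (t/2)(ξ+1)`, so the term `(1-w) ξ^N`
alone exceeds `N^(N/(N-1)) w (ξ+1)^N`; together with Bernoulli's inequality
`(ξ+1)^N - ξ^N ≤ N (ξ+1)^(N-1)` this makes the quotient at least `w^θ`. Hence `C = K^(1/N)`.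
-/

open Filter Set Topology

/-- The one-dimensional isoperimetric profile
`I_{N,D}(v) = (N/D) inf_{ξ ≥ 0} (min{v,1-v}(ξ+1)^N + max{v,1-v}ξ^N)^{(N-1)/N} / ((ξ+1)^N - ξ^N)`. -/
noncomputable def isoProfile (N D v : ℝ) : ℝ :=
  (N / D) * sInf { y : ℝ | ∃ ξ : ℝ, 0 ≤ ξ ∧
    y = (min v (1 - v) * (ξ + 1) ^ N + max v (1 - v) * ξ ^ N) ^ ((N - 1) / N)
          / ((ξ + 1) ^ N - ξ ^ N) }

open Real

noncomputable def profileQuotient (N w ξ : ℝ) : ℝ :=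
  (w * (ξ + 1) ^ N + (1 - w) * ξ ^ N) ^ ((N - 1) / N) / ((ξ + 1) ^ N - ξ ^ N)

lemma isoProfile_eq_of_le_half {N D w : ℝ} (hw : w ≤ 1 / 2) :
    isoProfile N D w = N / D * sInf (profileQuotient N w '' Ici 0) := by
  rw [isoProfile, min_eq_left (by linarith), max_eq_right (by linarith)]
  congr 2
  ext y
  simp only [mem_ofPred_eq, mem_image, mem_Ici, profileQuotient, eq_comm]

lemma rpow_add_one_sub_rpow_le {N : ℝ} (hN : 1 ≤ N) {ξ : ℝ} (hξ : 0 ≤ ξ) :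
    (ξ + 1) ^ N - ξ ^ N ≤ N * (ξ + 1) ^ (N - 1) := by
  have hx : 0 < ξ + 1 := by positivity
  have bernoulli := one_add_mul_self_le_rpow_one_add (s := -1 / (ξ + 1))
    (by rw [neg_div, neg_le_neg_iff, div_le_one hx]; linarith) hN
  rw [show 1 + -1 / (ξ + 1) = ξ / (ξ + 1) by field_simp; ring, div_rpow hξ hx.le,
    le_div_iff₀ (by positivity)] at bernoulli
  rw [rpow_sub_one hx.ne']
  have : (1 + N * (-1 / (ξ + 1))) * (ξ + 1) ^ N =
      (ξ + 1) ^ N - N * ((ξ + 1) ^ N / (ξ + 1)) := by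
    ring
  linarith

lemma rpow_rpow_sub_div_self {x : ℝ} (hx : 0 ≤ x) {N : ℝ} (hN : N ≠ 0) :
    (x ^ N) ^ ((N - 1) / N) = x ^ (N - 1) := by
  rw [← rpow_mul hx, mul_div_cancel₀ _ hN]

lemma le_profileQuotient_iff {N w ξ c : ℝ} (hN : 0 < N) (hξ : 0 ≤ ξ) :
    c ≤ profileQuotient N w ξ ↔
      c * ((ξ + 1) ^ N - ξ ^ N) ≤ (w * (ξ + 1) ^ N + (1 - w) * ξ ^ N) ^ ((N - 1) / N) :=
  le_div_iff₀ (sub_pos.2 (rpow_lt_rpow hξ (lt_add_one ξ) hN))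

lemma mul_one_sub_le_profileQuotient {N w ξ : ℝ} (hN : 1 ≤ N) (hw : 0 < w) (hw1 : w ≤ 1)
    (hξ : 0 ≤ ξ) (hξ1 : ξ ≤ 1) :
    w ^ ((N - 1) / N) * (1 - ξ) ≤ profileQuotient N w ξ := by
  have hN0 : 0 < N := by linarith
  rw [le_profileQuotient_iff hN0 hξ]
  have hx : 0 < ξ + 1 := by positivity
  have hξN : 0 ≤ ξ ^ N := rpow_nonneg hξ N
  have hxN : 0 < (ξ + 1) ^ N := rpow_pos_of_pos hx N
  have hθ : 0 ≤ (N - 1) / N := div_nonneg (by linarith) hN0.le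
  have key : (1 - ξ) * (ξ + 1) ^ N ≤ ((ξ + 1) ^ N) ^ ((N - 1) / N) := by
    rw [rpow_rpow_sub_div_self hx.le hN0.ne', rpow_sub_one hx.ne', le_div_iff₀ hx]
    nlinarith [mul_nonneg hxN.le (sq_nonneg ξ)]
  calc w ^ ((N - 1) / N) * (1 - ξ) * ((ξ + 1) ^ N - ξ ^ N)
      ≤ w ^ ((N - 1) / N) * ((1 - ξ) * (ξ + 1) ^ N) := by
        rw [mul_assoc]
        gcongr
        linarith
    _ ≤ w ^ ((N - 1) / N) * ((ξ + 1) ^ N) ^ ((N - 1) / N) := by gcongr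
    _ = (w * (ξ + 1) ^ N) ^ ((N - 1) / N) := (mul_rpow hw.le hxN.le).symm
    _ ≤ (w * (ξ + 1) ^ N + (1 - w) * ξ ^ N) ^ ((N - 1) / N) := by
        gcongr
        nlinarith

lemma rpow_le_profileQuotient {N w t ξ : ℝ} (hN : 1 < N) (hw : 0 < w) (hw2 : w ≤ 1 / 2)
    (ht : 0 ≤ t) (ht1 : t ≤ 1) (htξ : t ≤ ξ)
    (hwt : 2 ^ (N + 1) * N ^ (N / (N - 1)) * w ≤ t ^ N) :
    w ^ ((N - 1) / N) ≤ profileQuotient N w ξ := by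
  have hN0 : 0 < N := by linarith
  have hξ : 0 ≤ ξ := ht.trans htξ
  rw [le_profileQuotient_iff hN0 hξ]
  have hx : 0 < ξ + 1 := by positivity
  have hξN : 0 ≤ ξ ^ N := rpow_nonneg hξ N
  have hxN : 0 < (ξ + 1) ^ N := rpow_pos_of_pos hx N
  have hθ : 0 ≤ (N - 1) / N := div_nonneg (by linarith) hN0.le
  set M := N ^ (N / (N - 1))
  have hM : 0 < M := by positivity
  have hMθ : M ^ ((N - 1) / N) = N := by
    rw [← rpow_mul hN0.le, div_mul_div_comm, mul_comm N, div_self (by positivity), rpow_one]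
  have hspread : (t / 2) ^ N * (ξ + 1) ^ N ≤ ξ ^ N := by
    rw [← mul_rpow (by positivity) hx.le]
    exact rpow_le_rpow (by positivity) (by nlinarith) hN0.le
  have hsmall : 2 * M * w ≤ (t / 2) ^ N := by
    rw [div_rpow ht zero_le_two, le_div_iff₀ (by positivity)]
    rw [rpow_add two_pos, rpow_one] at hwt
    linarith
  have hdom : M * w * (ξ + 1) ^ N ≤ (1 - w) * ξ ^ N := by
    nlinarith [mul_le_mul_of_nonneg_right hsmall hxN.le]
  calc w ^ ((N - 1) / N) * ((ξ + 1) ^ N - ξ ^ N)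
      ≤ w ^ ((N - 1) / N) * (N * (ξ + 1) ^ (N - 1)) := by
        gcongr
        exact rpow_add_one_sub_rpow_le hN.le hξ
    _ = (M * w * (ξ + 1) ^ N) ^ ((N - 1) / N) := by
        rw [mul_rpow (by positivity) hxN.le, mul_rpow hM.le hw.le, hMθ,
          rpow_rpow_sub_div_self hx.le hN0.ne']
        ring
    _ ≤ ((1 - w) * ξ ^ N) ^ ((N - 1) / N) := by gcongr
    _ ≤ (w * (ξ + 1) ^ N + (1 - w) * ξ ^ N) ^ ((N - 1) / N) := by
        gcongr
        · nlinarith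
        · nlinarith

lemma mul_one_sub_le_profileQuotient_of_le_rpow {N w t ξ : ℝ} (hN : 1 < N) (hw : 0 < w)
    (hw2 : w ≤ 1 / 2) (ht : 0 ≤ t) (ht1 : t ≤ 1)
    (hwt : 2 ^ (N + 1) * N ^ (N / (N - 1)) * w ≤ t ^ N) (hξ : 0 ≤ ξ) :
    w ^ ((N - 1) / N) * (1 - t) ≤ profileQuotient N w ξ := by
  rcases le_total ξ t with hξt | htξ
  · calc w ^ ((N - 1) / N) * (1 - t) ≤ w ^ ((N - 1) / N) * (1 - ξ) := by gcongr
      _ ≤ profileQuotient N w ξ :=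
        mul_one_sub_le_profileQuotient hN.le hw (by linarith) hξ (hξt.trans ht1)
  · calc w ^ ((N - 1) / N) * (1 - t) ≤ w ^ ((N - 1) / N) := by
          apply mul_le_of_le_one_right (by positivity); linarith
      _ ≤ profileQuotient N w ξ := rpow_le_profileQuotient hN hw hw2 ht ht1 htξ hwt

/-- The expansion `I_{N,D}(w) ≥ (N/D) w^{1-1/N} (1 - C w^{1/N})` for small `w`,
with `C, w₀` depending only on `N`. -/
theorem stmt2 (N : ℝ) (hN : 1 < N) :
    ∃ C > (0:ℝ), ∃ w₀ > (0:ℝ), ∀ w : ℝ, 0 < w → w ≤ w₀ → ∀ D : ℝ, 0 < D →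
      (N / D) * w ^ (1 - 1 / N) * (1 - C * w ^ (1 / N)) ≤ isoProfile N D w := by
  have hN0 : 0 < N := by linarith
  set K : ℝ := 2 ^ (N + 1) * N ^ (N / (N - 1))
  have hK : 0 < K := by positivity
  refine ⟨K ^ (1 / N), by positivity, min (1 / 2) (1 / K), by positivity, ?_⟩
  intro w hw hw₀ D hD
  have hw2 : w ≤ 1 / 2 := hw₀.trans (min_le_left _ _)
  have hKw : K * w ≤ 1 := (le_div_iff₀' hK).1 (hw₀.trans (min_le_right _ _))
  have htN : ((K * w) ^ (1 / N)) ^ N = K * w := by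
    rw [← rpow_mul (by positivity), one_div_mul_cancel hN0.ne', rpow_one]
  rw [isoProfile_eq_of_le_half hw2, one_sub_div hN0.ne', mul_assoc, ← mul_rpow hK.le hw.le]
  gcongr
  refine le_csInf ⟨_, 0, self_mem_Ici, rfl⟩ ?_
  rintro _ ⟨ξ, hξ, rfl⟩
  exact mul_one_sub_le_profileQuotient_of_le_rpow hN hw hw2 (by positivity)
    (rpow_le_one (by positivity) hKw (by positivity)) htN.ge hξ
end

section
/- Let N > 1 and let h : [0,D'] → [0,∞) satisfy that h^{1/(N-1)} is concave. Suppose the right derivative of h^{1/(N-1)} at a point b ∈ (0,D') is nonpositive. Then h(x) ≤ h(b)·((D'-x)/(D'-b))^{N-1} for all x ∈ [0,b], and h(x) ≤ h(b) for all x ∈ [b,D']. -/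
/-!
With `g = h^{1/(N-1)}` concave and nonnegative: for `x ≤ b`, concavity on `[x, D']` together
with `g D' ≥ 0` gives `g x ≤ g b · (D' - x)/(D' - b)`; for `y ≥ b`, the secant slope of `g`
from `b` to `y` is bounded by the right derivative at `b`, which is nonpositive, so
`g y ≤ g b`. Raising to the power `N - 1` transfers both bounds to `h`.
-/
open Filter Set Topology

theorem hasDerivWithinAt_Ioi_of_tendsto_div_nhdsGT_zero {f : ℝ → ℝ} {x f' : ℝ}
    (hf : Tendsto (fun z => (f (x + z) - f x) / z) (𝓝[>] 0) (𝓝 f')) :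
    HasDerivWithinAt f f' (Ioi x) x := by
  have : 𝓝[>] x = map (fun z => x + z) (𝓝[>] 0) := by simp
  rw [hasDerivWithinAt_iff_tendsto_slope' self_notMem_Ioi, this, tendsto_map'_iff]
  refine hf.congr fun z => ?_
  simp [slope_def_field]

theorem ConcaveOn.le_mul_div_of_right_nonneg {s : Set ℝ} {f : ℝ → ℝ} {x b d : ℝ}
    (hf : ConcaveOn ℝ s f) (hx : x ∈ s) (hd : d ∈ s) (hfd : 0 ≤ f d) (hxb : x ≤ b) (hbd : b < d) :
    f x ≤ f b * ((d - x) / (d - b)) := by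
  rcases hxb.eq_or_lt with rfl | hxb
  · rw [div_self (sub_pos.2 hbd).ne', mul_one]
  have hslope := hf.slope_anti_adjacent hx hd hxb hbd
  rw [div_le_div_iff₀ (sub_pos.2 hbd) (sub_pos.2 hxb)] at hslope
  rw [mul_div_assoc', le_div_iff₀ (sub_pos.2 hbd)]
  nlinarith [mul_nonneg hfd (sub_pos.2 hxb).le]

theorem ConcaveOn.le_of_hasDerivWithinAt_Ioi_nonpos {s : Set ℝ} {f : ℝ → ℝ} {b y f' : ℝ}
    (hf : ConcaveOn ℝ s f) (hb : b ∈ s) (hy : y ∈ s) (hby : b ≤ y)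
    (hf' : HasDerivWithinAt f f' (Ioi b) b) (hf'_nonpos : f' ≤ 0) : f y ≤ f b := by
  rcases hby.eq_or_lt with rfl | hby
  · exact le_rfl
  have hslope := (hf.slope_le_of_hasDerivWithinAt_Ioi hb hy hby hf').trans hf'_nonpos
  rw [slope_def_field, div_nonpos_iff] at hslope
  rcases hslope with ⟨-, hneg⟩ | ⟨hnum, -⟩ <;> linarith

theorem stmt4_general (N D' b : ℝ) (h : ℝ → ℝ) (hN : 1 < N) (hb : b ∈ Ioo (0:ℝ) D')
    (h_nonneg : ∀ x ∈ Icc (0:ℝ) D', 0 ≤ h x)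
    (h_conc : ConcaveOn ℝ (Icc (0:ℝ) D') (fun x => h x ^ (1 / (N - 1))))
    (t : ℝ) (ht : t ≤ 0)
    (h_deriv : Tendsto (fun z => (h (b + z) ^ (1 / (N - 1)) - h b ^ (1 / (N - 1))) / z)
      (𝓝[>] (0:ℝ)) (𝓝 t)) :
    (∀ x ∈ Icc (0:ℝ) b, h x ≤ h b * ((D' - x) / (D' - b)) ^ (N - 1)) ∧
    (∀ x ∈ Icc b D', h x ≤ h b) := by
  obtain ⟨hb0, hbD⟩ := hb
  have hN1 : 0 < N - 1 := sub_pos.2 hN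
  set g : ℝ → ℝ := fun x => h x ^ (1 / (N - 1))
  have hg_nonneg (x) (hx : x ∈ Icc 0 D') : 0 ≤ g x := Real.rpow_nonneg (h_nonneg x hx) _
  have hg_rpow (x) (hx : x ∈ Icc 0 D') : g x ^ (N - 1) = h x := by
    simp only [g, one_div]
    exact Real.rpow_inv_rpow (h_nonneg x hx) hN1.ne'
  have hbmem : b ∈ Icc 0 D' := ⟨hb0.le, hbD.le⟩
  have hDmem : D' ∈ Icc 0 D' := ⟨by linarith, le_rfl⟩
  refine ⟨fun x hx => ?_, fun y hy => ?_⟩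
  · have hxmem : x ∈ Icc 0 D' := ⟨hx.1, hx.2.trans hbD.le⟩
    have hgx := h_conc.le_mul_div_of_right_nonneg hxmem hDmem (hg_nonneg D' hDmem) hx.2 hbD
    have hratio : 0 ≤ (D' - x) / (D' - b) := div_nonneg (by linarith [hx.2]) (by linarith)
    calc h x = g x ^ (N - 1) := (hg_rpow x hxmem).symm
      _ ≤ (g b * ((D' - x) / (D' - b))) ^ (N - 1) :=
        Real.rpow_le_rpow (hg_nonneg x hxmem) hgx hN1.le
      _ = h b * ((D' - x) / (D' - b)) ^ (N - 1) := by
        rw [Real.mul_rpow (hg_nonneg b hbmem) hratio, hg_rpow b hbmem]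
  · have hymem : y ∈ Icc 0 D' := ⟨hb0.le.trans hy.1, hy.2⟩
    have hgy := h_conc.le_of_hasDerivWithinAt_Ioi_nonpos hbmem hymem hy.1
      (hasDerivWithinAt_Ioi_of_tendsto_div_nhdsGT_zero h_deriv) ht
    calc h y = g y ^ (N - 1) := (hg_rpow y hymem).symm
      _ ≤ g b ^ (N - 1) := Real.rpow_le_rpow (hg_nonneg y hymem) hgy hN1.le
      _ = h b := hg_rpow b hbmem

/-- If `h^{1/(N-1)}` is concave on `[0,D']` and its right derivative at `b ∈ (0,D')` is
nonpositive, then `h(x) ≤ h(b)((D'-x)/(D'-b))^{N-1}` on `[0,b]` and `h ≤ h(b)` on `[b,D']`. -/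
theorem stmt4 (N D' b : ℝ) (h : ℝ → ℝ) (hN : 1 < N) (hD' : 0 < D') (hb : b ∈ Ioo (0:ℝ) D')
    (h_nonneg : ∀ x ∈ Icc (0:ℝ) D', 0 ≤ h x)
    (h_conc : ConcaveOn ℝ (Icc (0:ℝ) D') (fun x => h x ^ (1 / (N - 1))))
    (t : ℝ) (ht : t ≤ 0)
    (h_deriv : Tendsto (fun z => (h (b + z) ^ (1 / (N - 1)) - h b ^ (1 / (N - 1))) / z)
      (𝓝[>] (0:ℝ)) (𝓝 t)) :
    (∀ x ∈ Icc (0:ℝ) b, h x ≤ h b * ((D' - x) / (D' - b)) ^ (N - 1)) ∧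
    (∀ x ∈ Icc b D', h x ≤ h b) :=
  stmt4_general N D' b h hN hb h_nonneg h_conc t ht h_deriv
end
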